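/- arXiv:1607.08717 — 2 statements merged into one kernel-verified Lean document; each statement's English description precedes it below -/
import Mathlib

section
/- Let D := {(x̄, x̃) ∈ ℝ² : x̃ ≥ −x̄²} and let C : ℝ² → S² be affine, C(x̄, x̃) = A⁰ + A¹x̄ + A²x̃ with Aⁱ ∈ S². Assume that C(x) is positive semidefinite for every x ∈ D and that for every x̄ ∈ ℝ one has C(x̄, −x̄²) = C₁₁(x̄, −x̄²) · [[1, −2x̄], [−2x̄, 4x̄²]]. Then C(x) = 0 for every x ∈ ℝ². -/
open Matrix Set Asymptotics
open scoped RealInnerProductSpace NNReal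

noncomputable section

/-- `ℝ^d` with the Euclidean inner product and norm. -/
abbrev Vec (d : ℕ) := EuclideanSpace ℝ (Fin d)

/-- real `d × d` matrices. -/
abbrev Mat (d : ℕ) := Matrix (Fin d) (Fin d) ℝ

attribute [local instance] Matrix.normedAddCommGroup Matrix.normedSpace

/-- A matrix acting on a vector of `ℝ^d`. -/
def mv {d : ℕ} (A : Mat d) (u : Vec d) : Vec d := WithLp.toLp 2 (A.mulVec u)

/-- The `j`-th canonical basis vector of `ℝ^d`. -/
def evec {d : ℕ} (j : Fin d) : Vec d := EuclideanSpace.single j 1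

/-- The first-order normal cone `N¹_D(x)`. -/
def normalCone1 {d : ℕ} (D : Set (Vec d)) (x : Vec d) : Set (Vec d) :=
  {u | ∀ ε > (0:ℝ), ∃ δ > (0:ℝ), ∀ y ∈ D, ‖y - x‖ ≤ δ → ⟪u, y - x⟫ ≤ ε * ‖y - x‖}

/-- The second-order normal cone `N²_D(x) ⊆ ℝ^d × S^d`. -/
def normalCone2 {d : ℕ} (D : Set (Vec d)) (x : Vec d) : Set (Vec d × Mat d) :=
  {p | p.2.IsSymm ∧ ∀ ε > (0:ℝ), ∃ δ > (0:ℝ), ∀ y ∈ D, ‖y - x‖ ≤ δ →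
    ⟪p.1, y - x⟫ + (1/2:ℝ) * ⟪y - x, mv p.2 (y - x)⟫ ≤ ε * ‖y - x‖^2}

/-- The first-order normal cone for subsets of `ℝ`. -/
def normalConeR (D : Set ℝ) (x : ℝ) : Set ℝ :=
  {u | ∀ ε > (0:ℝ), ∃ δ > (0:ℝ), ∀ y ∈ D, |y - x| ≤ δ → u * (y - x) ≤ ε * |y - x|}

/-- The matrix of the orthogonal projection of `ℝ^d` onto the column space (range) of `A`,
i.e. `A A⁺` with `A⁺` the Moore–Penrose pseudoinverse. -/
def projRange {d : ℕ} (A : Mat d) : Mat d :=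
  Matrix.toEuclideanLin.symm
    (((LinearMap.range (Matrix.toEuclideanLin A)).subtypeL.comp
      (Submodule.orthogonalProjectionOnto (LinearMap.range (Matrix.toEuclideanLin A)))).toLinearMap)

/-- The element of `ℝ²` with the two given coordinates. -/
def vec2 (a b : ℝ) : Vec 2 := WithLp.toLp 2 ![a, b]

/-- The Hessian matrix of `φ : ℝ^d → ℝ` at `x`. -/
def hessMat {d : ℕ} (φ : Vec d → ℝ) (x : Vec d) : Mat d :=
  Matrix.of fun i j => fderiv ℝ (fun y => fderiv ℝ φ y (evec j)) x (evec i)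
/-!
Along the boundary parabola the entries of `C` are polynomials in `x̄` of degree at most two,
while the rank-one condition writes them as `C₁₁ · (1, -2x̄, 4x̄²)`. Comparing coefficients in the
`(1,1)` entry forces `C₁₁(x̄, -x̄²) = a` to be constant and `A²₁₁ = -4a`, `A⁰₁₁ = 0`. Positive
semidefiniteness at the origin gives `a ≥ 0`, and at `(0,1)` it gives `C₁₁(0,1) = -4a ≥ 0`. Hence
`a = 0`, so `C` vanishes on the whole parabola, and an affine map vanishing on a parabola is zero.
-/

theorem coeffs_eq_zero_of_forall_quartic_eq_zero {a b c d e : ℝ}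
    (h : ∀ x : ℝ, a + b * x + c * x ^ 2 + d * x ^ 3 + e * x ^ 4 = 0) :
    a = 0 ∧ b = 0 ∧ c = 0 ∧ d = 0 ∧ e = 0 := by
  have h₀ := h 0
  have h₁ := h 1
  have h₂ := h (-1)
  have h₃ := h 2
  have h₄ := h (-2)
  norm_num at h₀ h₁ h₂ h₃ h₄
  refine ⟨?_, ?_, ?_, ?_, ?_⟩ <;> linarith

theorem coeffs_eq_zero_of_forall_quadratic_eq_zero {a b c : ℝ}
    (h : ∀ x : ℝ, a + b * x + c * x ^ 2 = 0) : a = 0 ∧ b = 0 ∧ c = 0 := by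
  obtain ⟨ha, hb, hc, -⟩ := coeffs_eq_zero_of_forall_quartic_eq_zero (d := 0) (e := 0)
    (by simpa using h)
  exact ⟨ha, hb, hc⟩

@[simp] theorem vec2_zero (a b : ℝ) : vec2 a b 0 = a := rfl

@[simp] theorem vec2_one (a b : ℝ) : vec2 a b 1 = b := rfl

section AffinePencil

variable {A0 A1 A2 : Mat 2} {C : Vec 2 → Mat 2} (hC : ∀ p : Vec 2, C p = A0 + p 0 • A1 + p 1 • A2)
include hC

theorem affine_apply (p : Vec 2) (i j : Fin 2) :
    C p i j = A0 i j + p 0 * A1 i j + p 1 * A2 i j := by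
  simp [hC]

theorem eq_zero_of_forall_parabola_eq_zero (h : ∀ x : ℝ, C (vec2 x (-x ^ 2)) = 0) (p : Vec 2) :
    C p = 0 := by
  have hcoeffs : ∀ i j, A0 i j = 0 ∧ A1 i j = 0 ∧ A2 i j = 0 := fun i j => by
    obtain ⟨h₀, h₁, h₂⟩ := coeffs_eq_zero_of_forall_quadratic_eq_zero
      (a := A0 i j) (b := A1 i j) (c := -A2 i j) fun x => by
      have hx := congrFun (congrFun (h x) i) j
      rw [affine_apply hC, vec2_zero, vec2_one, Matrix.zero_apply] at hx
      linear_combination hx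
    exact ⟨h₀, h₁, neg_eq_zero.mp h₂⟩
  ext i j
  simp [affine_apply hC, hcoeffs]

variable (hbd : ∀ xb : ℝ, C (vec2 xb (-xb^2)) =
      C (vec2 xb (-xb^2)) 0 0 • !![1, -2*xb; -2*xb, 4*xb^2])
include hbd

theorem parabola_entry (i j : Fin 2) (x : ℝ) :
    A0 i j + x * A1 i j - x ^ 2 * A2 i j =
      (A0 0 0 + x * A1 0 0 - x ^ 2 * A2 0 0) * !![1, -2*x; -2*x, 4*x^2] i j := by
  have h := congrFun (congrFun (hbd x) i) j
  simp only [affine_apply hC, vec2_zero, vec2_one, Matrix.smul_apply, smul_eq_mul] at h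
  linear_combination h

theorem coeff_relations_of_rank_one_on_parabola :
    A0 1 1 = 0 ∧ A2 1 1 = -4 * A0 0 0 ∧ A1 0 0 = 0 ∧ A2 0 0 = 0 := by
  obtain ⟨h₀, -, h₂, h₃, h₄⟩ := coeffs_eq_zero_of_forall_quartic_eq_zero (a := A0 1 1)
      (b := A1 1 1) (c := -A2 1 1 - 4 * A0 0 0) (d := -4 * A1 0 0) (e := 4 * A2 0 0) fun x => by
    have h := parabola_entry hC hbd 1 1 x
    simp only [Matrix.of_apply, Matrix.cons_val_one, Matrix.cons_val_fin_one] at h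
    linear_combination h
  refine ⟨h₀, ?_, ?_, ?_⟩ <;> linarith

end AffinePencil

theorem stmt11_general (A0 A1 A2 : Mat 2)
    (C : Vec 2 → Mat 2) (hC : ∀ p : Vec 2, C p = A0 + p 0 • A1 + p 1 • A2)
    (D : Set (Vec 2)) (hD : D = {p : Vec 2 | -(p 0)^2 ≤ p 1})
    (hpsd : ∀ p ∈ D, (C p).PosSemidef)
    (hbd : ∀ xb : ℝ, C (vec2 xb (-xb^2)) =
      C (vec2 xb (-xb^2)) 0 0 • !![1, -2*xb; -2*xb, 4*xb^2]) :
    ∀ p : Vec 2, C p = 0 := by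
  obtain ⟨hc₀, hc₂, ha₁, ha₂⟩ := coeff_relations_of_rank_one_on_parabola hC hbd
  have h_origin : 0 ≤ C (vec2 0 0) 0 0 := (hpsd _ (by simp [hD])).diag_nonneg
  have h_e₂ : 0 ≤ C (vec2 0 1) 1 1 := (hpsd _ (by simp [hD])).diag_nonneg
  simp only [affine_apply hC, vec2_zero, vec2_one] at h_origin h_e₂
  have ha₀ : A0 0 0 = 0 := by linarith
  refine eq_zero_of_forall_parabola_eq_zero hC fun x => ?_
  rw [hbd x, affine_apply hC]
  simp [ha₀, ha₁, ha₂]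

/-- no nondegenerate affine covariance structure exists on the concave
parabolic domain `D = {x̃ ≥ −x̄²}`: the boundary rank-one condition forces `C ≡ 0`. -/
theorem stmt11 (A0 A1 A2 : Mat 2) (hA0 : A0.IsSymm) (hA1 : A1.IsSymm) (hA2 : A2.IsSymm)
    (C : Vec 2 → Mat 2) (hC : ∀ p : Vec 2, C p = A0 + p 0 • A1 + p 1 • A2)
    (D : Set (Vec 2)) (hD : D = {p : Vec 2 | -(p 0)^2 ≤ p 1})
    (hpsd : ∀ p ∈ D, (C p).PosSemidef)
    (hbd : ∀ xb : ℝ, C (vec2 xb (-xb^2)) =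
      C (vec2 xb (-xb^2)) 0 0 • !![1, -2*xb; -2*xb, 4*xb^2]) :
    ∀ p : Vec 2, C p = 0 :=
  stmt11_general A0 A1 A2 C hC D hD hpsd hbd
end
end

section
/- Let U ⊆ ℝ^d be open, Φ : ℝ^d → ℝ twice continuously differentiable, C : ℝ^d → S^d continuously differentiable, b : ℝ^d → ℝ^d, and v ∈ ℝ^d. Assume that for every x ∈ U: (i) C(x)∇Φ(x) = Φ(x)·v (i.e., ∇Φ(x)ᵀC(x) = Φ(x)vᵀ), and (ii) ⟨∇Φ(x), b(x) − ½ Σ_{j=1}^d D(Ce_j)(x)(e_j)⟩ ≤ 0. Then for every x ∈ U with Φ(x) ≠ 0: ⟨∇Φ(x), b(x)⟩ + ½ Tr(C(x)∇²Φ(x)) − (1/(2Φ(x))) ⟨∇Φ(x), C(x)∇Φ(x)⟩ ≤ 0. -/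
open Matrix Set Asymptotics
open scoped RealInnerProductSpace NNReal

noncomputable section

attribute [local instance] Matrix.normedAddCommGroup Matrix.normedSpace

/-!
Since `C` is symmetric, hypothesis (i) says that the vector field `Cᵀ ∇Φ` coincides with `Φ v`
on `U`. Taking divergences, the product rule gives
`Tr (C ∇²Φ) + ⟪∇Φ, ∑ⱼ D(C eⱼ)(eⱼ)⟫ = ⟪∇Φ, v⟫`, while `⟪∇Φ, C ∇Φ⟫ = Φ ⟪∇Φ, v⟫`.
Substituting both, the left-hand side equals `⟪∇Φ, b - ½ ∑ⱼ D(C eⱼ)(eⱼ)⟫ ≤ 0`.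
-/

open scoped Topology

section VectorCalculus

variable {d : ℕ}

def divergence (F : Vec d → Vec d) (x : Vec d) : ℝ :=
  ∑ k, fderiv ℝ F x (evec k) k

theorem fderiv_euclidean_apply {ι H : Type*} [Fintype ι] [NormedAddCommGroup H] [NormedSpace ℝ H]
    {F : H → EuclideanSpace ℝ ι} {x : H} (hF : DifferentiableAt ℝ F x) (w : H) (i : ι) :
    fderiv ℝ (fun y => F y i) x w = fderiv ℝ F x w i :=
  congrArg (· w) ((PiLp.hasFDerivAt_apply (𝕜 := ℝ) 2 (F x) i).comp x hF.hasFDerivAt).fderiv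

theorem gradient_apply_evec (Φ : Vec d → ℝ) (y : Vec d) (m : Fin d) :
    gradient Φ y m = fderiv ℝ Φ y (evec m) := by
  rw [← inner_gradient_left, evec, EuclideanSpace.inner_single_right]
  simp

theorem inner_mv_evec (A : Mat d) (u : Vec d) (k : Fin d) :
    ⟪u, mv A (evec k)⟫ = ∑ m, u m * A m k := by
  simp [mv, evec, PiLp.inner_apply, mul_comm]

theorem mv_transpose_apply (A : Mat d) (u : Vec d) (k : Fin d) :
    mv Aᵀ u k = ⟪u, mv A (evec k)⟫ := by
  rw [inner_mv_evec]
  simp [mv, Matrix.mulVec, dotProduct, mul_comm]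

theorem DifferentiableAt.mv_const {A : Vec d → Mat d} {x : Vec d} (hA : DifferentiableAt ℝ A x)
    (u : Vec d) : DifferentiableAt ℝ (fun y => mv (A y) u) x := by
  refine differentiableAt_euclidean.2 fun m => ?_
  simp only [mv, Matrix.mulVec, dotProduct]
  fun_prop

theorem ContDiff.differentiable_gradient {Φ : Vec d → ℝ} (hΦ : ContDiff ℝ 2 Φ) :
    Differentiable ℝ (gradient Φ) := by
  refine differentiable_euclidean.2 fun m => ?_
  simp_rw [gradient_apply_evec]
  exact ((hΦ.fderiv_right one_add_one_eq_two.le).differentiable one_ne_zero).clm_apply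
    (differentiable_const _)

theorem hessMat_eq_fderiv_gradient {Φ : Vec d → ℝ} {x : Vec d}
    (hΦ : DifferentiableAt ℝ (gradient Φ) x) :
    hessMat Φ x = Matrix.of fun k m => fderiv ℝ (gradient Φ) x (evec k) m := by
  ext k m
  simp only [hessMat, Matrix.of_apply, ← fderiv_euclidean_apply hΦ, gradient_apply_evec]

theorem Filter.EventuallyEq.divergence_eq {F G : Vec d → Vec d} {x : Vec d} (h : F =ᶠ[𝓝 x] G) :
    divergence F x = divergence G x := by
  rw [divergence, divergence, h.fderiv_eq]

theorem divergence_smul_const {Φ : Vec d → ℝ} {x : Vec d} (hΦ : DifferentiableAt ℝ Φ x)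
    (v : Vec d) : divergence (fun y => Φ y • v) x = ⟪gradient Φ x, v⟫ := by
  rw [PiLp.inner_apply]
  simp [divergence, fderiv_smul_const hΦ, gradient_apply_evec, mul_comm]

theorem divergence_mv_transpose {A : Vec d → Mat d} {G : Vec d → Vec d} {x : Vec d}
    (hA : DifferentiableAt ℝ A x) (hG : DifferentiableAt ℝ G x) :
    divergence (fun y => mv (A y)ᵀ (G y)) x =
      (A x * Matrix.of fun k m => fderiv ℝ G x (evec k) m).trace +
        ⟪G x, ∑ k, fderiv ℝ (fun y => mv (A y) (evec k)) x (evec k)⟫ := by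
  have hcol : ∀ k, DifferentiableAt ℝ (fun y => mv (A y) (evec k)) x := fun k => hA.mv_const _
  have hF : DifferentiableAt ℝ (fun y => mv (A y)ᵀ (G y)) x := by
    refine differentiableAt_euclidean.2 fun k => ?_
    simp only [mv_transpose_apply]
    exact hG.inner ℝ (hcol k)
  simp only [divergence, ← fderiv_euclidean_apply hF, mv_transpose_apply]
  rw [Finset.sum_congr rfl fun k _ => fderiv_inner_apply ℝ hG (hcol k) (evec k),
    Finset.sum_add_distrib, inner_sum, add_comm, Matrix.trace]
  simp only [inner_mv_evec, Matrix.diag_apply, Matrix.mul_apply, Matrix.of_apply]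
  rw [Finset.sum_comm]
  simp only [mul_comm]

end VectorCalculus

/-- the deterministic inequality underlying the boundary non-attainment
criterion (McKean's argument). -/
theorem stmt12 {d : ℕ} (U : Set (Vec d)) (hU : IsOpen U)
    (Φ : Vec d → ℝ) (hΦ : ContDiff ℝ 2 Φ)
    (C : Vec d → Mat d) (hCsymm : ∀ y, (C y).IsSymm) (hC1 : ContDiff ℝ 1 C)
    (b : Vec d → Vec d) (v : Vec d)
    (h1 : ∀ x ∈ U, mv (C x) (gradient Φ x) = Φ x • v)
    (h2 : ∀ x ∈ U,
      ⟪gradient Φ x, b x - (1/2 : ℝ) •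
        ∑ j, fderiv ℝ (fun y => mv (C y) (evec j)) x (evec j)⟫ ≤ 0) :
    ∀ x ∈ U, Φ x ≠ 0 →
      ⟪gradient Φ x, b x⟫ + (1/2 : ℝ) * (C x * hessMat Φ x).trace -
        1 / (2 * Φ x) * ⟪gradient Φ x, mv (C x) (gradient Φ x)⟫ ≤ 0 := by
  intro x hx hΦx
  have hgrad := hΦ.differentiable_gradient x
  have hfield : (fun y => mv (C y)ᵀ (gradient Φ y)) =ᶠ[𝓝 x] fun y => Φ y • v := by
    filter_upwards [hU.mem_nhds hx] with y hy
    rw [(hCsymm y).eq, h1 y hy]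
  have hdiv : (C x * hessMat Φ x).trace +
      ⟪gradient Φ x, ∑ j, fderiv ℝ (fun y => mv (C y) (evec j)) x (evec j)⟫ =
        ⟪gradient Φ x, v⟫ := by
    rw [hessMat_eq_fderiv_gradient hgrad,
      ← divergence_mv_transpose (hC1.differentiable one_ne_zero x) hgrad,
      hfield.divergence_eq, divergence_smul_const (hΦ.differentiable two_ne_zero x)]
  have hquad :
      1 / (2 * Φ x) * ⟪gradient Φ x, mv (C x) (gradient Φ x)⟫ = ⟪gradient Φ x, v⟫ / 2 := by
    rw [h1 x hx, real_inner_smul_right]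
    field_simp
  have hb := h2 x hx
  rw [inner_sub_right, real_inner_smul_right] at hb
  linarith
end
end
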